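/- arXiv:math/0405491 — 3 statements merged into one kernel-verified Lean document; each statement's English description precedes it below -/
import Mathlib

section
/- Let F ∈ K[Y] be monic squarefree of degree d over a field K of characteristic zero, u_k = Res[Y^k F' dY / F] the power sums of its roots, and h a polynomial (or rational function regular at the roots of F). Set v_k = Res[Y^k h F' dY / F]. Then the system of d linear equations Σ_{i=0}^{d-1} u_{k+i} τ_i = v_k (k = 0,…,d−1) has a unique solution (τ_0,…,τ_{d-1}) ∈ K^d, and the polynomial H = Σ τ_i Y^i is the unique polynomial of degree < d with H(y_j) = h(y_j) at every root y_j of F (i.e., H ≡ h mod F after clearing denominators). -/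
open Polynomial

/-- For `F` monic squarefree of degree `d` with power sums `u_k = Res[Y^k F' dY / F]`
and `v_k = Res[Y^k h F' dY / F]`, the Hankel system `Σ_i u_{k+i} τ_i = v_k`
(`k = 0,…,d-1`) has a unique solution `τ`, and `H = Σ τ_i Y^i` is the unique
polynomial of degree `< d` agreeing with `h` at the roots of `F`, i.e. `F ∣ H - h`. -/
theorem stmt3 {K : Type*} [Field K] [CharZero K] (F h : K[X]) (d : ℕ) (hd : 1 ≤ d)
    (hF : F.Monic) (hdeg : F.natDegree = d) (hsq : Squarefree F) :
    ∃! τ : Fin d → K,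
      (∀ k < d, ∑ i : Fin d,
          ((X ^ (k + (i : ℕ)) * F.derivative) %ₘ F).coeff (d - 1) * τ i
        = ((X ^ k * h * F.derivative) %ₘ F).coeff (d - 1)) ∧
      F ∣ ((∑ i : Fin d, C (τ i) * X ^ (i : ℕ)) - h) := by
  set H := h %ₘ F with hH
  have hHdeg : H.degree < F.degree := degree_modByMonic_lt h hF
  have hFdeg : F.degree = (d : ℕ) := by rw [degree_eq_natDegree hF.ne_zero, hdeg]
  -- coefficients of a sum polynomial
  have key : ∀ τ : Fin d → K, ∀ i : Fin d,
      ((∑ j : Fin d, C (τ j) * X ^ (j : ℕ))).coeff i = τ i := by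
    intro τ i
    rw [finset_sum_coeff, Finset.sum_eq_single i]
    · simp
    · intro b _ hb
      simp only [coeff_C_mul, coeff_X_pow]
      rw [if_neg (fun e => hb (Fin.ext e.symm)), mul_zero]
    · simp
  -- reconstruction of H from its coefficients
  have hHnat : H.natDegree < d := by
    rcases eq_or_ne H 0 with h0 | h0
    · rw [h0, natDegree_zero]; exact hd
    · have := (natDegree_lt_iff_degree_lt h0).mpr (hHdeg.trans_eq hFdeg)
      exact_mod_cast this
  have hHeq : (∑ j : Fin d, C (H.coeff j) * X ^ (j : ℕ)) = H := by
    conv_rhs => rw [H.as_sum_range' d hHnat]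
    rw [← Fin.sum_univ_eq_sum_range]
    simp [C_mul_X_pow_eq_monomial]
  -- F divides H - h
  have hdvd : F ∣ H - h := by
    rw [dvd_sub_comm]
    exact ⟨h /ₘ F, by linear_combination -(modByMonic_add_div h F)⟩
  refine ⟨fun i => H.coeff i, ⟨?_, by rwa [hHeq]⟩, ?_⟩
  · -- the linear system
    intro k hk
    have lin : ∀ P : Fin d → K[X],
        (∑ i : Fin d, P i %ₘ F) = (∑ i : Fin d, P i) %ₘ F := fun P =>
      (map_sum (modByMonicHom F) P Finset.univ).symm
    calc ∑ i : Fin d, ((X ^ (k + (i : ℕ)) * F.derivative) %ₘ F).coeff (d - 1) * H.coeff i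
        = (∑ i : Fin d, (H.coeff i • (X ^ (k + (i : ℕ)) * F.derivative)) %ₘ F).coeff (d - 1) := by
          rw [finset_sum_coeff]
          refine Finset.sum_congr rfl fun i _ => ?_
          rw [smul_modByMonic, coeff_smul, smul_eq_mul, mul_comm]
      _ = ((∑ i : Fin d, H.coeff i • (X ^ (k + (i : ℕ)) * F.derivative)) %ₘ F).coeff (d - 1) := by
          rw [lin]
      _ = ((X ^ k * H * F.derivative) %ₘ F).coeff (d - 1) := by
          congr 1
          have e2 : (∑ i : Fin d, H.coeff i • (X ^ (k + (i : ℕ)) * F.derivative))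
              = X ^ k * (∑ j : Fin d, C (H.coeff j) * X ^ (j : ℕ)) * F.derivative := by
            rw [Finset.mul_sum, Finset.sum_mul]
            refine Finset.sum_congr rfl fun i _ => ?_
            rw [smul_eq_C_mul, pow_add]; ring
          rw [e2, hHeq]
      _ = ((X ^ k * h * F.derivative) %ₘ F).coeff (d - 1) := by
          congr 1
          rw [← sub_eq_zero, ← sub_modByMonic, modByMonic_eq_zero_iff_dvd hF]
          have e3 : X ^ k * H * F.derivative - X ^ k * h * F.derivative
              = X ^ k * (H - h) * F.derivative := by ring
          rw [e3]
          exact (hdvd.mul_left _).mul_right _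
  · -- uniqueness
    intro τ' ⟨_, hdvd'⟩
    have hdiff : F ∣ (∑ i : Fin d, C (τ' i) * X ^ (i : ℕ)) - H := by
      have h2 := dvd_sub hdvd' hdvd
      simpa using h2
    have hdegdiff : ((∑ i : Fin d, C (τ' i) * X ^ (i : ℕ)) - H).degree < F.degree := by
      rw [hFdeg]
      apply lt_of_le_of_lt (degree_sub_le _ _)
      rw [max_lt_iff]
      refine ⟨?_, by exact_mod_cast hHdeg.trans_eq hFdeg⟩
      apply lt_of_le_of_lt (degree_sum_le _ _)
      apply (Finset.sup_lt_iff (by exact_mod_cast WithBot.bot_lt_coe d)).mpr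
      intro i _
      calc (C (τ' i) * X ^ (i : ℕ)).degree ≤ ((i : ℕ) : WithBot ℕ) :=
            degree_C_mul_X_pow_le _ _
        _ < (d : WithBot ℕ) := by exact_mod_cast i.2
    have hz : (∑ i : Fin d, C (τ' i) * X ^ (i : ℕ)) - H = 0 :=
      eq_zero_of_dvd_of_degree_lt hdiff hdegdiff
    funext i
    have he := sub_eq_zero.mp hz
    calc τ' i = ((∑ j : Fin d, C (τ' j) * X ^ (j : ℕ))).coeff i := (key τ' i).symm
      _ = H.coeff i := by rw [he]
end

section
/- Let F ∈ M[Y] be monic squarefree of degree d over a field M of characteristic zero, with factorization into pairwise coprime monic factors F = F_1 ⋯ F_s, and write F_{[j]} = ∏_{l ≠ j} F_l. Let U_1, …, U_s ∈ M[Y] satisfy the Bézout identity U_1 F_{[1]} + ⋯ + U_s F_{[s]} = 1. Given H_j ∈ M[Y] of degree ≤ deg F_j − 1 for each j, define H = Σ_j H_j U_j F_{[j]} mod F (reduced to degree < d). Then for every k ≥ 0: Res[Y^k H F' dY / F] = Σ_{j=1}^s Res[Y^k H_j F_j' dY / F_j], where F' and F_j' are derivatives. Moreover H ≡ H_j mod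 F_j for each j, and H = 0 implies H_j ≡ 0 mod F_j for all j. -/
open Polynomial

-- Finset version of derivative of a product
lemma deriv_prod' {M : Type*} [CommRing M] {s : ℕ} (Fj : Fin s → Polynomial M) :
    derivative (∏ j, Fj j)
      = ∑ j, (∏ l ∈ Finset.univ.erase j, Fj l) * derivative (Fj j) := by
  rw [Finset.prod_eq_multiset_prod, Polynomial.derivative_prod, Finset.sum_eq_multiset_sum]
  refine congr_arg _ (Multiset.map_congr rfl fun j hj => ?_)
  simp [Finset.prod_eq_multiset_prod, Finset.erase_val]

lemma finset_sum_modByMonic {M : Type*} [Field M] {ι : Type*} (t : Finset ι)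
    (f : ι → Polynomial M) (q : Polynomial M) :
    (∑ i ∈ t, f i) %ₘ q = ∑ i ∈ t, f i %ₘ q := by
  classical
  induction t using Finset.induction with
  | empty => simp
  | insert x t hx ih => rw [Finset.sum_insert hx, Finset.sum_insert hx, add_modByMonic, ih]

-- residue kills multiples, key multiplicativity
lemma res_mul {M : Type*} [Field M] {A B : Polynomial M} (hA : A.Monic) (hB : B.Monic)
    (P : Polynomial M) :
    ((P * B) %ₘ (A * B)).coeff ((A * B).natDegree - 1)
      = (P %ₘ A).coeff (A.natDegree - 1) := by
  set r := P %ₘ A with hr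
  have hrd : r.degree < A.degree := degree_modByMonic_lt P hA
  have hAB : (A * B).Monic := hA.mul hB
  have hPB : P * B = (A * B) * (P /ₘ A) + r * B := by
    conv_lhs => rw [← modByMonic_add_div P A]
    ring
  have hmod : (P * B) %ₘ (A * B) = r * B := by
    have hd : (r * B).degree < (A * B).degree := by
      rcases eq_or_ne r 0 with h0 | h0
      · rw [h0, zero_mul, degree_zero]
        exact bot_lt_iff_ne_bot.mpr (by simp [degree_eq_bot, hA.ne_zero, hB.ne_zero])
      · rw [degree_mul, degree_mul]
        exact WithBot.add_lt_add_right (by simpa using hB.ne_zero ∘ degree_eq_bot.mp) hrd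
    rw [hPB, add_modByMonic, (modByMonic_eq_self_iff hAB).mpr hd,
      (modByMonic_eq_zero_iff_dvd hAB).mpr ⟨P /ₘ A, rfl⟩, zero_add]
  rw [hmod]
  rcases Nat.eq_zero_or_pos A.natDegree with ha0 | ha0
  · -- A = 1
    have hA1 : A = 1 := hA.natDegree_eq_zero.mp ha0
    have hr0 : r = 0 := by rw [hr, hA1, modByMonic_one]
    simp [hr0]
  · have hab : (A * B).natDegree = A.natDegree + B.natDegree := hA.natDegree_mul hB
    have hrn : r.natDegree ≤ A.natDegree - 1 := by
      rcases eq_or_ne r 0 with h0 | h0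
      · simp [h0]
      · have := natDegree_lt_natDegree h0 hrd
        omega
    have hsplit : r * B = r * (B - X ^ B.natDegree) + r * X ^ B.natDegree := by ring
    rw [hsplit, coeff_add]
    have h2 : (r * X ^ B.natDegree).coeff ((A * B).natDegree - 1)
        = r.coeff (A.natDegree - 1) := by
      have : (A * B).natDegree - 1 = A.natDegree - 1 + B.natDegree := by omega
      rw [this, coeff_mul_X_pow]
    have h1 : (r * (B - X ^ B.natDegree)).coeff ((A * B).natDegree - 1) = 0 := by
      rcases eq_or_ne (B - X ^ B.natDegree) 0 with hb0 | hb0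
      · simp [hb0]
      · apply coeff_eq_zero_of_natDegree_lt
        have hbd : (B - X ^ B.natDegree).natDegree < B.natDegree := by
          have : (B - X ^ B.natDegree).degree < B.degree := by
            apply degree_sub_lt (by rw [degree_X_pow, degree_eq_natDegree hB.ne_zero]) hB.ne_zero
            simp [hB.leadingCoeff, monic_X_pow B.natDegree, Monic.leadingCoeff]
          exact natDegree_lt_natDegree hb0 this
        calc (r * (B - X ^ B.natDegree)).natDegree
            ≤ r.natDegree + (B - X ^ B.natDegree).natDegree := natDegree_mul_le
          _ < (A * B).natDegree - 1 := by omega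
      -- need B.natDegree ≥ 1 in the omega above; note hbd gives it
    rw [h1, h2, zero_add]

/-- Chinese-remainder construction of the interpolation polynomial for a reduced
cycle: with `F = F_1 ⋯ F_s` squarefree, Bézout cofactors `U_j`, and local data
`H_j` of degree `< deg F_j`, the polynomial `H = Σ H_j U_j F_{[j]} mod F` has
residues `Res[Y^k H F' dY / F] = Σ_j Res[Y^k H_j F_j' dY / F_j]`, satisfies
`H ≡ H_j mod F_j`, and `H = 0` forces all `H_j ≡ 0 mod F_j`. -/
theorem stmt11 {M : Type*} [Field M] [CharZero M] (s : ℕ)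
    (Fj Uj Hj : Fin s → Polynomial M)
    (hmon : ∀ j, (Fj j).Monic) (hsq : Squarefree (∏ j, Fj j))
    (hcop : ∀ j l, j ≠ l → IsCoprime (Fj j) (Fj l))
    (hBez : ∑ j, Uj j * ∏ l ∈ Finset.univ.erase j, Fj l = 1)
    (hHdeg : ∀ j, (Hj j).degree < (Fj j).degree) :
    let F := ∏ j, Fj j
    let H := (∑ j, Hj j * Uj j * ∏ l ∈ Finset.univ.erase j, Fj l) %ₘ F
    (∀ k : ℕ, ((X ^ k * H * F.derivative) %ₘ F).coeff (F.natDegree - 1)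
        = ∑ j, ((X ^ k * Hj j * (Fj j).derivative) %ₘ (Fj j)).coeff
            ((Fj j).natDegree - 1)) ∧
    (∀ j, Fj j ∣ (H - Hj j)) ∧
    (H = 0 → ∀ j, Fj j ∣ Hj j) := by
  intro F H
  have hFmon : F.Monic := monic_prod_of_monic _ _ fun j _ => hmon j
  -- claim 2 first
  have claim2 : ∀ j, Fj j ∣ (H - Hj j) := by
    intro j
    set S := ∑ j, Hj j * Uj j * ∏ l ∈ Finset.univ.erase j, Fj l with hS
    have hHS : H - S = -(F * (S /ₘ F)) := by
      rw [show H = S %ₘ F from rfl, modByMonic_eq_sub_mul_div S F]; ring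
    have hdvdF : Fj j ∣ F := Finset.dvd_prod_of_mem _ (Finset.mem_univ j)
    have h1 : Fj j ∣ H - S := hHS ▸ (hdvdF.mul_right _).neg_right
    have hjerase : ∀ l, l ≠ j → Fj j ∣ ∏ m ∈ Finset.univ.erase l, Fj m := by
      intro l hl
      exact Finset.dvd_prod_of_mem _ (Finset.mem_erase.mpr ⟨hl.symm, Finset.mem_univ j⟩)
    have h2 : Fj j ∣ S - Hj j := by
      have : S - Hj j = (Hj j * (Uj j * (∏ l ∈ Finset.univ.erase j, Fj l) - 1))
          + ∑ l ∈ Finset.univ.erase j, Hj l * Uj l * ∏ m ∈ Finset.univ.erase l, Fj m := by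
        rw [hS, ← Finset.sum_erase_add _ _ (Finset.mem_univ j)]
        ring
      rw [this]
      apply dvd_add
      · apply Dvd.dvd.mul_left
        have : Uj j * (∏ l ∈ Finset.univ.erase j, Fj l) - 1
            = -∑ l ∈ Finset.univ.erase j, Uj l * ∏ m ∈ Finset.univ.erase l, Fj m := by
          rw [← hBez, ← Finset.sum_erase_add _ _ (Finset.mem_univ j)]
          ring
        rw [this]
        exact (Finset.dvd_sum fun l hl =>
          ((hjerase l (Finset.mem_erase.mp hl).1).mul_left _)).neg_right
      · exact Finset.dvd_sum fun l hl => ((hjerase l (Finset.mem_erase.mp hl).1).mul_left _)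
    have := dvd_add h1 h2
    simpa using this
  refine ⟨?_, claim2, fun h0 j => by simpa [h0] using (claim2 j).neg_right.neg_right⟩
  intro k
  have hFder : X ^ k * H * F.derivative
      = ∑ j, (X ^ k * H * derivative (Fj j)) * ∏ l ∈ Finset.univ.erase j, Fj l := by
    rw [show F.derivative = derivative (∏ j, Fj j) from rfl, deriv_prod', Finset.mul_sum]
    apply Finset.sum_congr rfl; intro j _; ring
  rw [hFder]
  -- linearity of %ₘ over sums
  rw [finset_sum_modByMonic, finset_sum_coeff]
  apply Finset.sum_congr rfl
  intro j _
  have hF : F = Fj j * ∏ l ∈ Finset.univ.erase j, Fj l :=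
    (Finset.mul_prod_erase _ _ (Finset.mem_univ j)).symm
  have hBmon : (∏ l ∈ Finset.univ.erase j, Fj l).Monic :=
    monic_prod_of_monic _ _ fun l _ => hmon l
  rw [show ((X ^ k * H * derivative (Fj j)) * ∏ l ∈ Finset.univ.erase j, Fj l) %ₘ F
      = ((X ^ k * H * derivative (Fj j)) * ∏ l ∈ Finset.univ.erase j, Fj l)
        %ₘ (Fj j * ∏ l ∈ Finset.univ.erase j, Fj l) from by rw [← hF],
    show F.natDegree = (Fj j * ∏ l ∈ Finset.univ.erase j, Fj l).natDegree from by rw [← hF],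
    res_mul (hmon j) hBmon]
  -- now replace H by Hj j mod Fj j
  obtain ⟨G, hG⟩ := claim2 j
  have hHrep : X ^ k * H * derivative (Fj j)
      = X ^ k * Hj j * derivative (Fj j) + Fj j * (X ^ k * G * derivative (Fj j)) := by
    have : H = Hj j + Fj j * G := by rw [← hG]; ring
    rw [this]; ring
  rw [hHrep, add_modByMonic,
    (modByMonic_eq_zero_iff_dvd (hmon j)).mpr (Dvd.intro _ rfl), add_zero]
end

section
/- Let M be a field of characteristic zero, F ∈ M[Y] monic squarefree of degree d, and suppose H ∈ M[Y] of degree ≤ d−1 and G ∈ M[Y] are such that no irreducible factor of F divides H and no irreducible factor F_j of F satisfies F_j | G. If the (2d−1)-term sequence w_k := Res[Y^k H G dY / F] (k = 0, …, 2d−2) is given, then the d×d Hankel matrix (w_{i+j})_{0≤i,j≤d−1} is invertible over M. -/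
open Polynomial

/-- Lemma 5: for `F` monic squarefree of degree `d`, `H` of degree `≤ d−1`, if no
irreducible factor of `F` divides `H` nor `G`, then the `d×d` Hankel matrix of the
residues `w_k = Res[Y^k H G dY / F]` is invertible. -/
theorem stmt17 {M : Type*} [Field M] [CharZero M] (F H G : Polynomial M) (d : ℕ)
    (hd : 1 ≤ d) (hF : F.Monic) (hdeg : F.natDegree = d) (hsq : Squarefree F)
    (hH : H.natDegree ≤ d - 1)
    (hHfac : ∀ p, Irreducible p → p ∣ F → ¬ p ∣ H)
    (hGfac : ∀ p, Irreducible p → p ∣ F → ¬ p ∣ G) :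
    IsUnit (Matrix.det (Matrix.of fun i j : Fin d =>
      ((X ^ ((i : ℕ) + (j : ℕ)) * H * G) %ₘ F).coeff (d - 1))) := by
  classical
  have hFdeg : F.degree = (d : WithBot ℕ) := by
    rw [Polynomial.degree_eq_natDegree hF.ne_zero, hdeg]
  rw [isUnit_iff_ne_zero]
  intro hdet
  obtain ⟨v, hv, hmul⟩ := (Matrix.exists_mulVec_eq_zero_iff).mpr hdet
  set Q : M[X] := ∑ j : Fin d, Polynomial.C (v j) * X ^ (j : ℕ) with hQdef
  have hQcoeff : ∀ j : Fin d, Q.coeff (j : ℕ) = v j := by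
    intro j
    rw [hQdef, Polynomial.finset_sum_coeff]
    rw [Finset.sum_eq_single j]
    · simp
    · intro b _ hb
      simp only [Polynomial.coeff_C_mul, Polynomial.coeff_X_pow]
      rw [if_neg (by exact fun h => hb (Fin.ext h.symm)), mul_zero]
    · simp
  have hQne : Q ≠ 0 := by
    intro h
    apply hv
    funext j
    simp [← hQcoeff j, h]
  have hQdeg : Q.degree < (d : WithBot ℕ) := by
    rw [hQdef]
    apply lt_of_le_of_lt (Polynomial.degree_sum_le _ _)
    refine (Finset.sup_lt_iff (by exact_mod_cast WithBot.bot_lt_coe d)).mpr ?_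
    intro j _
    apply lt_of_le_of_lt (Polynomial.degree_C_mul_X_pow_le _ _)
    exact_mod_cast j.2
  -- linear functional
  set φ : M[X] →ₗ[M] M := (Polynomial.lcoeff M (d - 1)).comp (Polynomial.modByMonicHom F)
    with hφdef
  have hφ : ∀ P : M[X], φ P = (P %ₘ F).coeff (d - 1) := fun P => rfl
  have hexp : ∀ i : Fin d, X ^ (i : ℕ) * (Q * (H * G)) =
      ∑ j : Fin d, v j • (X ^ ((i : ℕ) + (j : ℕ)) * H * G) := by
    intro i
    rw [hQdef, Finset.sum_mul, Finset.mul_sum]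
    refine Finset.sum_congr rfl fun j _ => ?_
    rw [Polynomial.smul_eq_C_mul]
    ring
  have hw : ∀ i : Fin d, φ (X ^ (i : ℕ) * (Q * (H * G))) = 0 := by
    intro i
    rw [hexp i, map_sum]
    have := congrFun hmul i
    simp only [Matrix.mulVec, dotProduct, Matrix.of_apply, Pi.zero_apply] at this
    rw [← this]
    refine Finset.sum_congr rfl fun j _ => ?_
    rw [map_smul, smul_eq_mul, hφ, mul_comm]
  set R : M[X] := (Q * (H * G)) %ₘ F with hRdef
  have hmodeq : ∀ i : ℕ, (X ^ i * (Q * (H * G))) %ₘ F = (X ^ i * R) %ₘ F := by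
    intro i
    have hdvd : F ∣ (X ^ i * (Q * (H * G)) - X ^ i * R) := by
      rw [← mul_sub]
      exact Dvd.dvd.mul_left (by
        have := Polynomial.modByMonic_add_div (Q * (H * G)) F
        exact ⟨(Q * (H * G)) /ₘ F, by linear_combination -this⟩) _
    have h0 : (X ^ i * (Q * (H * G)) - X ^ i * R) %ₘ F = 0 :=
      (Polynomial.modByMonic_eq_zero_iff_dvd hF).mpr hdvd
    have := Polynomial.sub_modByMonic (X ^ i * (Q * (H * G))) (X ^ i * R) F
    have h2 := this.symm.trans h0
    exact sub_eq_zero.mp h2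
  have hR : ∀ i : Fin d, ((X ^ (i : ℕ) * R) %ₘ F).coeff (d - 1) = 0 := by
    intro i
    have := hw i
    rw [hφ, hmodeq] at this
    exact this
  have hcoe : ∀ i : ℕ, ∀ m : ℕ, d ≤ m + i → R.coeff m = 0 := by
    intro i
    induction i with
    | zero =>
      intro m hm
      apply Polynomial.coeff_eq_zero_of_degree_lt
      refine lt_of_lt_of_le ?_ (by exact_mod_cast hm.trans (Nat.le_add_right m 0) : (d : WithBot ℕ) ≤ m)
      rw [← hFdeg]
      exact Polynomial.degree_modByMonic_lt _ hF
    | succ i ih =>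
      intro m hm
      by_cases hmi : d ≤ m + i
      · exact ih m hmi
      have hmi' : m + i = d - 1 := by omega
      have hid : i < d := by omega
      have hXRdeg : (X ^ i * R).degree < (d : WithBot ℕ) := by
        rw [Polynomial.degree_lt_iff_coeff_zero]
        intro n hn
        have hn' : d ≤ n := by exact_mod_cast hn
        rw [Polynomial.coeff_X_pow_mul']
        rw [if_pos (by omega)]
        rw [ih (n - i) (by omega)]
      have hmod : (X ^ i * R) %ₘ F = X ^ i * R := by
        rw [Polynomial.modByMonic_eq_self_iff hF, hFdeg]
        exact hXRdeg
      have := hR ⟨i, hid⟩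
      rw [hmod] at this
      rw [← hmi'] at this
      rwa [Polynomial.coeff_X_pow_mul] at this
  have hR0 : R = 0 := by
    ext m
    rw [hcoe d m (Nat.le_add_left d m), Polynomial.coeff_zero]
  have hFdvd : F ∣ Q * (H * G) := (Polynomial.modByMonic_eq_zero_iff_dvd hF).mp hR0
  -- find an irreducible factor of F not dividing Q
  have hFQ : ¬ F ∣ Q := by
    intro h
    have := Polynomial.degree_le_of_dvd h hQne
    rw [hFdeg] at this
    exact absurd (lt_of_le_of_lt this hQdeg) (lt_irrefl _)
  set D : M[X] := EuclideanDomain.gcd F Q with hDdef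
  obtain ⟨E, hE⟩ : D ∣ F := EuclideanDomain.gcd_dvd_left F Q
  have hEne : E ≠ 0 := by
    intro h
    rw [h, mul_zero] at hE
    exact hF.ne_zero hE
  have hEnu : ¬ IsUnit E := by
    intro h
    apply hFQ
    obtain ⟨u, hu⟩ := h
    have : F ∣ D := ⟨↑u⁻¹, by rw [hE, ← hu, mul_assoc]; simp⟩
    exact this.trans (EuclideanDomain.gcd_dvd_right F Q)
  obtain ⟨p, hpirr, hpE⟩ := WfDvdMonoid.exists_irreducible_factor hEnu hEne
  have hpF : p ∣ F := hpE.trans ⟨D, by rw [hE]; ring⟩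
  have hpQ : ¬ p ∣ Q := by
    intro h
    have hpD : p ∣ D := EuclideanDomain.dvd_gcd hpF h
    have : p * p ∣ F := by
      rw [hE]
      exact mul_dvd_mul hpD hpE
    exact hpirr.not_isUnit (hsq p this)
  have hpprime : Prime p := hpirr.prime
  rcases hpprime.dvd_mul.mp (hpF.trans hFdvd) with h | h
  · exact hpQ h
  rcases hpprime.dvd_mul.mp h with h | h
  · exact hHfac p hpirr hpF h
  · exact hGfac p hpirr hpF h
end
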